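/- Let ρ : ℕ → ℝ satisfy |ρ(t)| ≤ 1 for all t and ρ(t) → 0 as t → ∞. Let c : ℕ → ℝ satisfy ∑_{k} c_k² < ∞, and let k⋆ ≥ 1 be the smallest positive index with c_{k⋆} ≠ 0. Define ρ_U(t) := ∑_{k ≥ k⋆} c_k² · ρ(t)^k (the series converges absolutely for each t). Then the function t ↦ |ρ_U(t)| is summable over ℕ if and only if the function t ↦ |ρ(t)|^{k⋆} is summable over ℕ. -/

import Mathlib

/-!
Factor `ρ_U(t) = ρ(t)^{k⋆} g(ρ(t))` with `g(x) = ∑_k c_{k⋆+k}² x^k`. Since the coefficients are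
nonnegative and summable, Tannery's theorem gives `g(ρ(t)) → g(0) = c_{k⋆}² ≠ 0` as `ρ(t) → 0`, so
`|ρ_U| =Θ |ρ|^{k⋆}` and the two summability conditions coincide.
-/

open Filter Topology Asymptotics

theorem tsum_mul_pow_add (b : ℕ → ℝ) (x : ℝ) (n : ℕ) :
    ∑' k, b k * x ^ (n + k) = x ^ n * ∑' k, b k * x ^ k := by
  rw [← tsum_mul_left]
  exact tsum_congr fun k => by ring

theorem tendsto_tsum_mul_pow_of_tendsto_zero {b : ℕ → ℝ} (hb0 : ∀ k, 0 ≤ b k) (hb : Summable b)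
    {u : ℕ → ℝ} (hu1 : ∀ t, |u t| ≤ 1) (hu0 : Tendsto u atTop (𝓝 0)) :
    Tendsto (fun t => ∑' k, b k * u t ^ k) atTop (𝓝 (b 0)) := by
  have hlim : ∀ k, Tendsto (fun t => b k * u t ^ k) atTop (𝓝 (b k * 0 ^ k)) :=
    fun k => (hu0.pow k).const_mul (b k)
  have hbound : ∀ t k, ‖b k * u t ^ k‖ ≤ b k := fun t k => by
    rw [norm_mul, norm_pow, Real.norm_of_nonneg (hb0 k)]
    exact mul_le_of_le_one_right (hb0 k) (pow_le_one₀ (norm_nonneg _) (hu1 t))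
  have := tendsto_tsum_of_dominated_convergence hb hlim (Eventually.of_forall hbound)
  rwa [tsum_eq_single 0 fun k hk => by simp [hk], pow_zero, mul_one] at this

theorem summable_mul_iff_of_tendsto {f h : ℕ → ℝ} {L : ℝ} (hL : L ≠ 0)
    (hh : Tendsto h atTop (𝓝 L)) : Summable (fun t => f t * h t) ↔ Summable f := by
  have hconst : h =Θ[atTop] fun _ => (1 : ℝ) :=
    ((isEquivalent_const_iff_tendsto hL).2 hh).isTheta.trans (isTheta_const_const hL one_ne_zero)
  simpa using ((isTheta_refl f atTop).mul hconst).summable_iff_nat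

theorem summable_rhoU_iff_summable_pow_rank_general
    (ρ : ℕ → ℝ) (hρ1 : ∀ t, |ρ t| ≤ 1) (hρ0 : Filter.Tendsto ρ Filter.atTop (nhds 0))
    (c : ℕ → ℝ) (hc : Summable fun k => c k ^ 2)
    (ks : ℕ) (hcks : c ks ≠ 0)
    (ρU : ℕ → ℝ)
    (hρU : ∀ t, ρU t = ∑' k : ℕ, c (ks + k) ^ 2 * ρ t ^ (ks + k)) :
    (Summable fun t => |ρU t|) ↔ Summable fun t => |ρ t| ^ ks := by
  have hb : Summable fun k => c (ks + k) ^ 2 := by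
    simpa only [add_comm] using (summable_nat_add_iff ks).2 hc
  have hlim := (tendsto_tsum_mul_pow_of_tendsto_zero (fun k => sq_nonneg (c (ks + k))) hb
    hρ1 hρ0).abs
  have hfactor : ∀ t, |ρU t| = |ρ t| ^ ks * |∑' k, c (ks + k) ^ 2 * ρ t ^ k| := fun t => by
    rw [hρU, tsum_mul_pow_add, abs_mul, abs_pow]
  simp only [hfactor]
  exact summable_mul_iff_of_tendsto (by simpa using hcks) hlim

/-- Lemma 4.3 (free setting): with `ρ_U(t) = ∑_{k ≥ k⋆} c_k² ρ(t)^k`, where `k⋆ ≥ 1` is the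
Chebyshev rank (the smallest positive index with `c_{k⋆} ≠ 0`), the covariance `ρ_U` is
absolutely summable iff `∑_t |ρ(t)|^{k⋆} < ∞`. -/
theorem summable_rhoU_iff_summable_pow_rank
    (ρ : ℕ → ℝ) (hρ1 : ∀ t, |ρ t| ≤ 1) (hρ0 : Filter.Tendsto ρ Filter.atTop (nhds 0))
    (c : ℕ → ℝ) (hc : Summable fun k => c k ^ 2)
    (ks : ℕ) (hks1 : 1 ≤ ks) (hcks : c ks ≠ 0)
    (hmin : ∀ k, 1 ≤ k → k < ks → c k = 0)
    (ρU : ℕ → ℝ)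
    (hρU : ∀ t, ρU t = ∑' k : ℕ, c (ks + k) ^ 2 * ρ t ^ (ks + k)) :
    (Summable fun t => |ρU t|) ↔ Summable fun t => |ρ t| ^ ks :=
  summable_rhoU_iff_summable_pow_rank_general ρ hρ1 hρ0 c hc ks hcks ρU hρU
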